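/- arXiv:0712.3333 — 2 statements merged into one kernel-verified Lean document; each statement's English description precedes it below -/
import Mathlib

section
/- Let G be a finite simple graph and let (i,j) ∈ E be a weak edge of G. If R is an optimal vertex cover of the reduced graph G^{(i,j)}, then R* (defined as R ∪ Δ_ij ∪ {j} if D_i ⊆ R, and R ∪ Δ_ij ∪ {i} otherwise) is an optimal vertex cover of G. -/
variable {V : Type*} [Fintype V] [DecidableEq V]

/-- `S` is a vertex cover of `G`: every edge has at least one endpoint in `S`. -/
def IsVertexCover (G : SimpleGraph V) (S : Finset V) : Prop :=
  ∀ ⦃a b : V⦄, G.Adj a b → a ∈ S ∨ b ∈ S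

/-- `Δ_ij`: the common neighbours of `i` and `j`. -/
def DeltaSet (G : SimpleGraph V) [DecidableRel G.Adj] (i j : V) : Finset V :=
  Finset.univ.filter fun k => G.Adj i k ∧ G.Adj j k

/-- `D_i`: the neighbours of `i` other than `j` that are not common neighbours
of `i` and `j`.  (`D_j` is `DSide G j i`.) -/
def DSide (G : SimpleGraph V) [DecidableRel G.Adj] (i j : V) : Finset V :=
  Finset.univ.filter fun s => G.Adj i s ∧ s ≠ j ∧ s ∉ DeltaSet G i j

/-- The removed vertex set `{i, j} ∪ Δ_ij`. -/
def RemovedSet (G : SimpleGraph V) [DecidableRel G.Adj] (i j : V) : Finset V :=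
  insert i (insert j (DeltaSet G i j))

/-- The reduced graph `G^{(i,j)}`: vertices outside `{i,j} ∪ Δ_ij`, with the edges of
`G` between such vertices together with all pairs `(s,t)`, `s ∈ D_i`, `t ∈ D_j`. -/
def ReducedGraph (G : SimpleGraph V) [DecidableRel G.Adj] (i j : V) : SimpleGraph V :=
  SimpleGraph.fromRel fun a b =>
    a ∉ RemovedSet G i j ∧ b ∉ RemovedSet G i j ∧
      (G.Adj a b ∨ (a ∈ DSide G i j ∧ b ∈ DSide G j i))

/-- `R` is a vertex cover of the reduced graph `G^{(i,j)}`: it is a subset of the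
vertex set of `G^{(i,j)}` and covers all its edges. -/
def IsReducedVC (G : SimpleGraph V) [DecidableRel G.Adj] (i j : V) (R : Finset V) :
    Prop :=
  (∀ v ∈ R, v ∉ RemovedSet G i j) ∧
    ∀ ⦃a b : V⦄, (ReducedGraph G i j).Adj a b → a ∈ R ∨ b ∈ R

/-- `R* = R ∪ Δ_ij ∪ {j}` if `D_i ⊆ R`, and `R* = R ∪ Δ_ij ∪ {i}` otherwise. -/
def RStar (G : SimpleGraph V) [DecidableRel G.Adj] (i j : V) (R : Finset V) :
    Finset V :=
  if DSide G i j ⊆ R then R ∪ DeltaSet G i j ∪ {j} else R ∪ DeltaSet G i j ∪ {i}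

/-- `S` is an optimal vertex cover of `G`: a vertex cover of minimum cardinality. -/
def IsOptimalVertexCover (G : SimpleGraph V) (S : Finset V) : Prop :=
  IsVertexCover G S ∧ ∀ T : Finset V, IsVertexCover G T → S.card ≤ T.card

/-! Let `V0` be an optimal cover containing exactly one endpoint of the weak edge, say `i`.
Then `V0 ⊇ Δ_ij`, and `V0 \ ({i,j} ∪ Δ_ij)` covers `G^{(i,j)}`: an edge `(s,t) ∈ D_i × D_j`
is covered by `t`, since `j ∉ V0`. Hence `|R| + |Δ_ij| + 1 ≤ |V0|`, and `R*` has exactly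
this size. It is a cover: if `R` misses some `s ∈ D_i`, then `R ⊇ D_j` because `s` is joined
to all of `D_j` in `G^{(i,j)}`, so `R ∪ Δ_ij ∪ {i}` covers the edges at `i` and at `j`;
otherwise `D_i ⊆ R` and symmetrically `R ∪ Δ_ij ∪ {j}` is a cover. -/

lemma card_pair_inter_eq_one_iff {α : Type*} [DecidableEq α] {a b : α} (hab : a ≠ b)
    (s : Finset α) : (({a, b} : Finset α) ∩ s).card = 1 ↔ Xor (a ∈ s) (b ∈ s) := by
  by_cases ha : a ∈ s <;> by_cases hb : b ∈ s <;>
    simp [Finset.insert_inter_of_mem, Finset.insert_inter_of_notMem, ha, hb, hab]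

section ReducedGraph

variable {G : SimpleGraph V} [DecidableRel G.Adj] {i j : V}

lemma mem_deltaSet {k : V} : k ∈ DeltaSet G i j ↔ G.Adj i k ∧ G.Adj j k := by
  simp [DeltaSet]

lemma mem_dSide {s : V} : s ∈ DSide G i j ↔ G.Adj i s ∧ s ≠ j ∧ s ∉ DeltaSet G i j := by
  simp [DSide]

lemma mem_removedSet {v : V} :
    v ∈ RemovedSet G i j ↔ v = i ∨ v = j ∨ v ∈ DeltaSet G i j := by
  simp [RemovedSet]

lemma deltaSet_comm : DeltaSet G j i = DeltaSet G i j := by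
  ext k
  simp [mem_deltaSet, and_comm]

lemma removedSet_comm : RemovedSet G j i = RemovedSet G i j := by
  ext v
  rw [mem_removedSet, mem_removedSet, deltaSet_comm]
  tauto

lemma notMem_deltaSet_left : i ∉ DeltaSet G i j := fun h => G.irrefl (mem_deltaSet.1 h).1

lemma notMem_deltaSet_right : j ∉ DeltaSet G i j := fun h => G.irrefl (mem_deltaSet.1 h).2

lemma notMem_removedSet_of_mem_dSide {s : V} (hs : s ∈ DSide G i j) : s ∉ RemovedSet G i j := by
  obtain ⟨his, hsj, hsΔ⟩ := mem_dSide.1 hs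
  rw [mem_removedSet]
  rintro (rfl | rfl | h)
  exacts [G.irrefl his, hsj rfl, hsΔ h]

lemma ne_of_mem_dSide {s t : V} (hs : s ∈ DSide G i j) (ht : t ∈ DSide G j i) : s ≠ t := by
  rintro rfl
  exact (mem_dSide.1 hs).2.2 (mem_deltaSet.2 ⟨(mem_dSide.1 hs).1, (mem_dSide.1 ht).1⟩)

lemma eq_or_mem_deltaSet_or_mem_dSide {b : V} (hb : G.Adj j b) :
    b = i ∨ b ∈ DeltaSet G i j ∨ b ∈ DSide G j i := by
  rw [mem_dSide, deltaSet_comm]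
  tauto

lemma covers_reducedGraph_iff {T : Finset V} :
    (∀ ⦃a b : V⦄, (ReducedGraph G i j).Adj a b → a ∈ T ∨ b ∈ T) ↔
      ∀ ⦃a b : V⦄, a ∉ RemovedSet G i j → b ∉ RemovedSet G i j →
        (G.Adj a b ∨ (a ∈ DSide G i j ∧ b ∈ DSide G j i)) → a ∈ T ∨ b ∈ T := by
  constructor
  · intro hT a b ha hb hab
    refine hT (SimpleGraph.fromRel_adj _ a b |>.2 ⟨?_, Or.inl ⟨ha, hb, hab⟩⟩)
    rcases hab with hab | ⟨hs, ht⟩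
    exacts [hab.ne, ne_of_mem_dSide hs ht]
  · rintro hT a b ⟨-, ⟨ha, hb, hab⟩ | ⟨hb, ha, hba⟩⟩
    exacts [hT ha hb hab, (hT hb ha hba).symm]

lemma reducedGraph_comm : ReducedGraph G j i = ReducedGraph G i j := by
  ext a b
  simp only [ReducedGraph, SimpleGraph.fromRel_adj, removedSet_comm, G.adj_comm a b]
  tauto

lemma isReducedVC_comm {T : Finset V} : IsReducedVC G j i T ↔ IsReducedVC G i j T := by
  rw [IsReducedVC, IsReducedVC, removedSet_comm, reducedGraph_comm]

/-- `D_i × D_j` is complete bipartite in `G^{(i,j)}`. -/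
lemma dSide_subset_of_not_subset {R : Finset V} (hR : IsReducedVC G i j R)
    (hDi : ¬ DSide G i j ⊆ R) : DSide G j i ⊆ R := by
  obtain ⟨s, hs, hsR⟩ := Finset.not_subset.1 hDi
  intro t ht
  have hst := covers_reducedGraph_iff.1 hR.2 (notMem_removedSet_of_mem_dSide hs)
    (removedSet_comm (G := G) ▸ notMem_removedSet_of_mem_dSide ht) (Or.inr ⟨hs, ht⟩)
  exact hst.resolve_left hsR

/-- `D_j` consists of the neighbours of `j` not covered by `{i} ∪ Δ_ij`. -/
lemma isVertexCover_union_deltaSet_union_singleton {R : Finset V}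
    (hR : ∀ ⦃a b : V⦄, a ∉ RemovedSet G i j → b ∉ RemovedSet G i j → G.Adj a b →
      a ∈ R ∨ b ∈ R)
    (hDj : DSide G j i ⊆ R) : IsVertexCover G (R ∪ DeltaSet G i j ∪ {i}) := by
  set S := R ∪ DeltaSet G i j ∪ {i}
  have hj : ∀ ⦃b : V⦄, G.Adj j b → b ∈ S := fun b hb => by
    rcases eq_or_mem_deltaSet_or_mem_dSide (i := i) hb with rfl | hbΔ | hbD
    exacts [by simp [S], by simp [S, hbΔ], by simp [S, hDj hbD]]
  have hout : ∀ ⦃a b : V⦄, G.Adj a b → a ∉ S → b ∉ S → a ∉ RemovedSet G i j := by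
    intro a b hab ha hb
    rw [mem_removedSet]
    rintro (rfl | rfl | haΔ)
    exacts [ha (by simp [S]), hb (hj hab), ha (by simp [S, haΔ])]
  intro a b hab
  by_contra! h
  rcases hR (hout hab h.1 h.2) (hout hab.symm h.2 h.1) hab with ha | hb
  exacts [h.1 (by simp [S, ha]), h.2 (by simp [S, hb])]

lemma isVertexCover_rStar {R : Finset V} (hR : IsReducedVC G i j R) :
    IsVertexCover G (RStar G i j R) := by
  have hcov := fun ⦃a b : V⦄ ha hb (hab : G.Adj a b) =>
    covers_reducedGraph_iff.1 hR.2 ha hb (Or.inl hab)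
  unfold RStar
  split_ifs with hDi
  · rw [← deltaSet_comm]
    refine isVertexCover_union_deltaSet_union_singleton (fun a b ha hb => ?_) hDi
    rw [removedSet_comm] at ha hb
    exact hcov ha hb
  · exact isVertexCover_union_deltaSet_union_singleton hcov (dSide_subset_of_not_subset hR hDi)

lemma card_rStar {R : Finset V} (hR : ∀ v ∈ R, v ∉ RemovedSet G i j) :
    (RStar G i j R).card = R.card + (DeltaSet G i j).card + 1 := by
  have hRΔ : Disjoint R (DeltaSet G i j) :=
    Finset.disjoint_left.2 fun v hv hvΔ => hR v hv (mem_removedSet.2 (Or.inr (Or.inr hvΔ)))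
  have hi : i ∉ R ∪ DeltaSet G i j := by
    simpa [notMem_deltaSet_left] using fun h => hR i h (by simp [mem_removedSet])
  have hj : j ∉ R ∪ DeltaSet G i j := by
    simpa [notMem_deltaSet_right] using fun h => hR j h (by simp [mem_removedSet])
  unfold RStar
  split_ifs <;> simp [Finset.card_union_of_disjoint, hRΔ, hi, hj]

lemma isReducedVC_sdiff_removedSet {V0 : Finset V} (hV0 : IsVertexCover G V0) (hj : j ∉ V0) :
    IsReducedVC G i j (V0 \ RemovedSet G i j) := by
  refine ⟨fun v hv => (Finset.mem_sdiff.1 hv).2, covers_reducedGraph_iff.2 ?_⟩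
  rintro a b ha hb (hab | ⟨-, hbD⟩)
  · rcases hV0 hab with h | h
    exacts [Or.inl (Finset.mem_sdiff.2 ⟨h, ha⟩), Or.inr (Finset.mem_sdiff.2 ⟨h, hb⟩)]
  · exact Or.inr (Finset.mem_sdiff.2 ⟨(hV0 (mem_dSide.1 hbD).1).resolve_left hj, hb⟩)

/-- A cover avoiding `j` contains `Δ_ij`. -/
lemma card_sdiff_removedSet_add {V0 : Finset V} (hV0 : IsVertexCover G V0) (hi : i ∈ V0)
    (hj : j ∉ V0) : (V0 \ RemovedSet G i j).card + (DeltaSet G i j).card + 1 = V0.card := by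
  have hinter : V0 ∩ RemovedSet G i j = insert i (DeltaSet G i j) := by
    ext v
    simp only [Finset.mem_inter, Finset.mem_insert, mem_removedSet]
    constructor
    · rintro ⟨hv, rfl | rfl | hvΔ⟩
      exacts [Or.inl rfl, absurd hv hj, Or.inr hvΔ]
    · rintro (rfl | hvΔ)
      · exact ⟨hi, Or.inl rfl⟩
      · exact ⟨(hV0 (mem_deltaSet.1 hvΔ).2).resolve_left hj, Or.inr (Or.inr hvΔ)⟩
  rw [← Finset.card_sdiff_add_card_inter V0 (RemovedSet G i j), hinter,
    Finset.card_insert_of_notMem notMem_deltaSet_left, add_assoc]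

lemma card_add_card_deltaSet_add_one_le {R V0 : Finset V}
    (hRopt : ∀ T : Finset V, IsReducedVC G i j T → R.card ≤ T.card)
    (hV0 : IsVertexCover G V0) (hi : i ∈ V0) (hj : j ∉ V0) :
    R.card + (DeltaSet G i j).card + 1 ≤ V0.card := by
  have := hRopt _ (isReducedVC_sdiff_removedSet hV0 hj)
  have := card_sdiff_removedSet_add hV0 hi hj
  omega

end ReducedGraph

/-- If `(i,j)` is a weak edge of `G` and `R` is an optimal vertex cover of the reduced
graph `G^{(i,j)}`, then `R*` is an optimal vertex cover of `G`. -/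
theorem rstar_optimal_of_weak (G : SimpleGraph V) [DecidableRel G.Adj] (i j : V)
    (hij : G.Adj i j)
    (hweak : ∃ V0 : Finset V, IsOptimalVertexCover G V0 ∧
      (({i, j} : Finset V) ∩ V0).card = 1)
    (R : Finset V) (hR : IsReducedVC G i j R)
    (hRopt : ∀ T : Finset V, IsReducedVC G i j T → R.card ≤ T.card) :
    IsOptimalVertexCover G (RStar G i j R) := by
  obtain ⟨V0, ⟨hV0, hV0min⟩, hweak⟩ := hweak
  have hbound : R.card + (DeltaSet G i j).card + 1 ≤ V0.card := by
    rcases (card_pair_inter_eq_one_iff hij.ne V0).1 hweak with ⟨hi, hj⟩ | ⟨hj, hi⟩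
    · exact card_add_card_deltaSet_add_one_le hRopt hV0 hi hj
    · rw [← deltaSet_comm]
      exact card_add_card_deltaSet_add_one_le (fun T hT => hRopt T (isReducedVC_comm.1 hT))
        hV0 hj hi
  refine ⟨isVertexCover_rStar hR, fun T hT => ?_⟩
  rw [card_rStar hR.1]
  exact hbound.trans (hV0min T hT)
end

section
/- Let G be a finite simple graph, let x* be an optimal solution of the LP relaxation LPR of the vertex cover problem on G, let I₀ = {i : x*_i = 0}, I₁ = {i : x*_i = 1}, and let Ḡ = G \ (I₀ ∪ I₁). If R is an optimal vertex cover of Ḡ, then R ∪ I₁ is an optimal vertex cover of G. -/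
variable {V : Type*} [Fintype V] [DecidableEq V]

/-- `x` is feasible for the LP relaxation LPR of the vertex cover problem on `G`:
`x_i + x_j ≥ 1` for every edge `(i,j)` and `x_i ≥ 0` for all `i`. -/
def LPFeasible (G : SimpleGraph V) (x : V → ℝ) : Prop :=
  (∀ i : V, 0 ≤ x i) ∧ ∀ ⦃i j : V⦄, G.Adj i j → 1 ≤ x i + x j

/-- `x` is an optimal solution of the LP relaxation LPR on `G`. -/
def LPOptimal (G : SimpleGraph V) (x : V → ℝ) : Prop :=
  LPFeasible G x ∧ ∀ y : V → ℝ, LPFeasible G y → ∑ i : V, x i ≤ ∑ i : V, y i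

/-- `G \ D`: the induced subgraph of `G` on `V \ D`, viewed as a graph on the same
vertex type by deleting all edges meeting `D`. -/
def DeleteVerts (G : SimpleGraph V) (D : Finset V) : SimpleGraph V where
  Adj a b := G.Adj a b ∧ a ∉ D ∧ b ∉ D
  symm := ⟨fun _ _ h => ⟨h.1.symm, h.2.2, h.2.1⟩⟩
  loopless := ⟨fun a h => G.loopless.irrefl a h.1⟩

/-! An optimal LP solution satisfies `x ≤ 1`, since truncating at `1` stays feasible; hence every
neighbour of a vertex of `I₀` lies in `I₁`, and `R ∪ I₁` covers `G`. Given any cover `T`,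
`T \ (I₀ ∪ I₁)` covers `Ḡ`, so `|R| ≤ |T \ (I₀ ∪ I₁)|`, and it remains to show
`|I₁ \ T| ≤ |T ∩ I₀|`. Otherwise, moving a small weight `ε` from each vertex of `I₁ \ T` to each
vertex of `T ∩ I₀` keeps `x` feasible and strictly lowers `∑ x`: an edge at a vertex of `I₁ \ T`
ends in `T`, where the new weight is at least `ε` once `ε` is below every positive value of `x`. -/

open Finset

section

variable {V : Type*} [Fintype V] {G : SimpleGraph V} {x : V → ℝ}

/-- The paper's `I₀` and `I₁` are `levelSet x 0` and `levelSet x 1`. -/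
noncomputable def levelSet (x : V → ℝ) (c : ℝ) : Finset V := {i | x i = c}

@[simp]
lemma mem_levelSet {c : ℝ} {i : V} : i ∈ levelSet x c ↔ x i = c := by
  simp [levelSet]

lemma disjoint_levelSet {a b : ℝ} (hab : a ≠ b) : Disjoint (levelSet x a) (levelSet x b) :=
  disjoint_left.2 fun _ ha hb => hab ((mem_levelSet.1 ha).symm.trans (mem_levelSet.1 hb))

lemma LPOptimal.le_one (hx : LPOptimal G x) (i : V) : x i ≤ 1 := by
  have hmin : LPFeasible G fun j => min (x j) 1 := by
    refine ⟨fun j => le_min (hx.1.1 j) zero_le_one, fun j k hjk => ?_⟩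
    have := hx.1.2 hjk
    simp only [min_def]
    split_ifs <;> linarith [hx.1.1 j, hx.1.1 k]
  by_contra! hi
  have hlt : ∑ j, min (x j) 1 < ∑ j, x j :=
    sum_lt_sum (fun j _ => min_le_left _ _) ⟨i, mem_univ i, min_lt_iff.2 (.inr hi)⟩
  linarith [hx.2 _ hmin]

lemma LPOptimal.eq_one_of_adj_of_eq_zero (hx : LPOptimal G x) {i j : V} (hij : G.Adj i j)
    (hi : x i = 0) : x j = 1 :=
  le_antisymm (hx.le_one j) (by linarith [hx.1.2 hij])

lemma LPOptimal.isVertexCover_union [DecidableEq V] {R : Finset V} (hx : LPOptimal G x)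
    (hR : IsVertexCover (DeleteVerts G (levelSet x 0 ∪ levelSet x 1)) R) :
    IsVertexCover G (R ∪ levelSet x 1) := by
  intro a b hab
  simp only [mem_union, mem_levelSet]
  by_cases ha0 : x a = 0
  · exact .inr (.inr (hx.eq_one_of_adj_of_eq_zero hab ha0))
  by_cases hb0 : x b = 0
  · exact .inl (.inr (hx.eq_one_of_adj_of_eq_zero hab.symm hb0))
  by_cases ha1 : x a = 1
  · exact .inl (.inr ha1)
  by_cases hb1 : x b = 1
  · exact .inr (.inr hb1)
  have := hR ⟨hab, by simp [ha0, ha1], by simp [hb0, hb1]⟩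
  tauto

lemma exists_pos_le_of_pos {ι : Type*} [Finite ι] (x : ι → ℝ) :
    ∃ ε > 0, ∀ i, 0 < x i → ε ≤ x i := by
  have hnear : ∀ i, ∀ᶠ t in nhds (0 : ℝ), 0 < x i → t ≤ x i := fun i => by
    by_cases hi : 0 < x i
    · exact (eventually_le_nhds hi).mono fun _ ht _ => ht
    · exact .of_forall fun _ h => absurd h hi
  exact ((Filter.eventually_all.2 hnear).filter_mono nhdsWithin_le_nhds).and
    (self_mem_nhdsWithin (s := Set.Ioi 0)) |>.exists.imp fun ε h => ⟨h.2, h.1⟩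

noncomputable def shiftToCover [DecidableEq V] (x : V → ℝ) (T : Finset V) (ε : ℝ) (i : V) : ℝ :=
  x i + ε * ((if i ∈ T ∩ levelSet x 0 then 1 else 0) - (if i ∈ levelSet x 1 \ T then 1 else 0))

lemma sum_shiftToCover [DecidableEq V] (T : Finset V) (ε : ℝ) :
    ∑ i, shiftToCover x T ε i = ∑ i, x i + ε * (#(T ∩ levelSet x 0) - #(levelSet x 1 \ T)) := by
  simp only [shiftToCover, sum_add_distrib, ← mul_sum, sum_sub_distrib, sum_boole,
    filter_mem_eq_inter, univ_inter]

lemma lpFeasible_shiftToCover [DecidableEq V] (hx : LPFeasible G x) {T : Finset V}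
    (hT : IsVertexCover G T) {ε : ℝ} (hε : 0 ≤ ε) (hεx : ∀ i, 0 < x i → ε ≤ x i) :
    LPFeasible G (shiftToCover x T ε) := by
  have h_out : ∀ i ∉ T, x i = 1 → shiftToCover x T ε i = 1 - ε := fun i hiT hi => by
    simp [shiftToCover, hiT, hi, sub_eq_add_neg]
  have h_ge : ∀ i, i ∈ T ∨ x i ≠ 1 → x i ≤ shiftToCover x T ε i := fun i hi => by
    unfold shiftToCover
    split_ifs <;> simp_all
  have h_cover : ∀ i ∈ T, ε ≤ shiftToCover x T ε i := fun i hiT => by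
    rcases (hx.1 i).eq_or_lt with hi | hi
    · simp [shiftToCover, hiT, ← hi]
    · exact (hεx i hi).trans (h_ge i (.inl hiT))
  have h_le_one : ∀ i, x i = 1 → ε ≤ 1 := fun i hi => hi ▸ hεx i (by simp [hi])
  refine ⟨fun i => ?_, fun i j hij => ?_⟩
  · by_cases hi : i ∉ T ∧ x i = 1
    · linarith [h_out i hi.1 hi.2, h_le_one i hi.2]
    · exact (hx.1 i).trans (h_ge i (by tauto))
  by_cases hi : i ∉ T ∧ x i = 1
  · have hjT : j ∈ T := (hT hij).resolve_left hi.1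
    linarith [h_out i hi.1 hi.2, h_cover j hjT]
  by_cases hj : j ∉ T ∧ x j = 1
  · have hiT : i ∈ T := (hT hij).resolve_right hj.1
    linarith [h_out j hj.1 hj.2, h_cover i hiT]
  linarith [hx.2 hij, h_ge i (by tauto), h_ge j (by tauto)]

lemma LPOptimal.card_levelSet_one_sdiff_le [DecidableEq V] (hx : LPOptimal G x) {T : Finset V}
    (hT : IsVertexCover G T) : #(levelSet x 1 \ T) ≤ #(T ∩ levelSet x 0) := by
  by_contra! hlt
  obtain ⟨ε, hε, hεx⟩ := exists_pos_le_of_pos x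
  have hsum := hx.2 _ (lpFeasible_shiftToCover hx.1 hT hε.le hεx)
  rw [sum_shiftToCover] at hsum
  have hlt' : (#(T ∩ levelSet x 0) : ℝ) < #(levelSet x 1 \ T) := by exact_mod_cast hlt
  nlinarith

end

lemma IsVertexCover.sdiff_deleteVerts {V : Type*} {G : SimpleGraph V} {T : Finset V}
    [DecidableEq V] (hT : IsVertexCover G T) (D : Finset V) :
    IsVertexCover (DeleteVerts G D) (T \ D) := fun _ _ hab =>
  (hT hab.1).imp (fun ha => mem_sdiff.2 ⟨ha, hab.2.1⟩) (fun hb => mem_sdiff.2 ⟨hb, hab.2.2⟩)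

lemma card_union_le_of_card_sdiff_le {α : Type*} [DecidableEq α] {R T I₀ I₁ : Finset α}
    (hI : Disjoint I₀ I₁) (hR : #R ≤ #(T \ (I₀ ∪ I₁))) (hI₁ : #(I₁ \ T) ≤ #(T ∩ I₀)) :
    #(R ∪ I₁) ≤ #T := by
  have hT : #(T \ (I₀ ∪ I₁)) + #(T ∩ I₀) + #(T ∩ I₁) = #T := by
    rw [add_assoc, ← card_union_of_disjoint (hI.mono inter_subset_right inter_subset_right),
      ← inter_union_distrib_left, card_sdiff_add_card_inter]
  have hI₁T : #(T ∩ I₁) + #(I₁ \ T) = #I₁ := by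
    rw [inter_comm, card_inter_add_card_sdiff]
  linarith [card_union_le R I₁]

/-- Let `x*` be an optimal solution of LPR on `G`, `I₀ = {i : x*_i = 0}`,
`I₁ = {i : x*_i = 1}` and `Ḡ = G \ (I₀ ∪ I₁)`.  If `R` is an optimal vertex cover of
`Ḡ`, then `R ∪ I₁` is an optimal vertex cover of `G`. -/
theorem nemhauser_trotter_optimal_cover (G : SimpleGraph V) (xstar : V → ℝ)
    (hx : LPOptimal G xstar) (I0 I1 : Finset V)
    (hI0 : ∀ i : V, i ∈ I0 ↔ xstar i = 0) (hI1 : ∀ i : V, i ∈ I1 ↔ xstar i = 1)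
    (R : Finset V) (hR : IsOptimalVertexCover (DeleteVerts G (I0 ∪ I1)) R) :
    IsOptimalVertexCover G (R ∪ I1) := by
  obtain rfl : I0 = levelSet xstar 0 := by ext; simp [hI0]
  obtain rfl : I1 = levelSet xstar 1 := by ext; simp [hI1]
  refine ⟨hx.isVertexCover_union hR.1, fun T hT => ?_⟩
  exact card_union_le_of_card_sdiff_le (disjoint_levelSet zero_ne_one)
    (hR.2 _ (hT.sdiff_deleteVerts _)) (hx.card_levelSet_one_sdiff_le hT)
end
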